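/- arXiv:2308.05559 — 4 statements merged into one kernel-verified Lean document; each statement's English description precedes it below -/
import Mathlib

section
/- Let ω:[0,∞)→[0,∞) be non-decreasing, continuous, differentiable on (0,r₀] for some r₀∈(0,1), with ω(0)=0 and ω₀:=ω(r₀)<1. Fix q>1, set λ₀=r₀^{-n/q}, and define a(λ)=λ^{ω(λ^{-q/n})} for λ≥λ₀. Then the function s(λ)=λ/a(λ)=λ^{1-ω(λ^{-q/n})} satisfies s(λ)≥λ^{1-ω₀} for all λ≥λ₀, and its derivative satisfies s'(λ)≥(1-ω₀)/a(λ)>0 for all λ≥λ₀; in particular s is strictly increasing, hence invertible from [λ₀,∞) onto [s₀,∞) where s₀=λ₀^{1-ω₀}. -/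
open Real Set MeasureTheory

theorem stmt0 (n : ℕ) (hn : 1 ≤ n) (q r₀ : ℝ) (hq : 1 < q) (hr₀ : r₀ ∈ Set.Ioo (0:ℝ) 1)
    (ω : ℝ → ℝ) (hω_cont : ContinuousOn ω (Set.Ici 0))
    (hω_mono : MonotoneOn ω (Set.Ici 0))
    (hω_nonneg : ∀ r ≥ (0:ℝ), 0 ≤ ω r)
    (hω_diff : DifferentiableOn ℝ ω (Set.Ioc 0 r₀))
    (hω_deriv_nonneg : ∀ r ∈ Set.Ioc (0:ℝ) r₀, 0 ≤ derivWithin ω (Set.Ioc 0 r₀) r)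
    (hω0 : ω 0 = 0) (hω₀ : ω r₀ < 1)
    (lam₀ : ℝ) (hlam₀ : lam₀ = r₀ ^ (-(n : ℝ)/q))
    (a s : ℝ → ℝ)
    (ha : ∀ l ≥ lam₀, a l = l ^ (ω (l ^ (-(q / (n:ℝ))))))
    (hs : ∀ l ≥ lam₀, s l = l / a l) :
    (∀ l ≥ lam₀, s l ≥ l ^ (1 - ω r₀)) ∧
    (∀ l ≥ lam₀, ∃ d : ℝ, HasDerivWithinAt s d (Set.Ici lam₀) l ∧
      (1 - ω r₀) / a l ≤ d ∧ 0 < d) ∧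
    StrictMonoOn s (Set.Ici lam₀) ∧
    Set.BijOn s (Set.Ici lam₀) (Set.Ici (lam₀ ^ (1 - ω r₀))) := by
  obtain ⟨hr0, hr1⟩ := hr₀
  have hn0 : (0:ℝ) < n := by exact_mod_cast Nat.lt_of_lt_of_le Nat.zero_lt_one hn
  have hq0 : (0:ℝ) < q := lt_trans one_pos hq
  set c : ℝ := -(q / (n:ℝ)) with hc
  have hc_neg : c < 0 := by
    have : 0 < q / (n:ℝ) := div_pos hq0 hn0
    simpa [hc] using this
  have hlam₀_pos : 0 < lam₀ := hlam₀ ▸ Real.rpow_pos_of_pos hr0 _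
  have hlam₀_gt1 : 1 < lam₀ := by
    rw [hlam₀, Real.one_lt_rpow_iff_of_pos hr0]
    right
    refine ⟨hr1, ?_⟩
    have : 0 < (n:ℝ)/q := div_pos hn0 hq0
    simpa [neg_div] using this
  have hpowlam : lam₀ ^ c = r₀ := by
    rw [hlam₀, ← Real.rpow_mul hr0.le]
    have : (-(n:ℝ)/q) * c = 1 := by
      rw [hc]; field_simp
    rw [this, Real.rpow_one]
  have hω₀_nonneg : 0 ≤ ω r₀ := hω_nonneg r₀ hr0.le
  -- basic facts for l ≥ lam₀
  have hl_gt1 : ∀ l ≥ lam₀, 1 < l := fun l hl => lt_of_lt_of_le hlam₀_gt1 hl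
  have hl_pos : ∀ l ≥ lam₀, 0 < l := fun l hl => lt_trans one_pos (hl_gt1 l hl)
  have hr_mem : ∀ l ≥ lam₀, l ^ c ∈ Set.Ioc (0:ℝ) r₀ := by
    intro l hl
    refine ⟨Real.rpow_pos_of_pos (hl_pos l hl) _, ?_⟩
    rw [← hpowlam]
    exact Real.rpow_le_rpow_of_nonpos hlam₀_pos hl hc_neg.le
  have hωr_le : ∀ l ≥ lam₀, ω (l ^ c) ≤ ω r₀ := by
    intro l hl
    exact hω_mono (Set.mem_Ici.2 (hr_mem l hl).1.le) (Set.mem_Ici.2 hr0.le) (hr_mem l hl).2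
  have hωr_nonneg : ∀ l ≥ lam₀, 0 ≤ ω (l ^ c) := fun l hl =>
    hω_nonneg _ (hr_mem l hl).1.le
  have ha_pos : ∀ l ≥ lam₀, 0 < a l := by
    intro l hl
    rw [ha l hl]
    exact Real.rpow_pos_of_pos (hl_pos l hl) _
  have hs' : ∀ l ≥ lam₀, s l = l ^ (1 - ω (l ^ c)) := by
    intro l hl
    rw [hs l hl, ha l hl, Real.rpow_sub (hl_pos l hl), Real.rpow_one]
  -- part 1
  have part1 : ∀ l ≥ lam₀, s l ≥ l ^ (1 - ω r₀) := by
    intro l hl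
    rw [hs' l hl]
    exact Real.rpow_le_rpow_of_exponent_le (hl_gt1 l hl).le
      (by linarith [hωr_le l hl])
  -- part 2 : derivative
  have part2 : ∀ l ≥ lam₀, ∃ d : ℝ, HasDerivWithinAt s d (Set.Ici lam₀) l ∧
      (1 - ω r₀) / a l ≤ d ∧ 0 < d := by
    intro l hl
    have hl0 : 0 < l := hl_pos l hl
    set r : ℝ := l ^ c with hr
    set D : ℝ := derivWithin ω (Set.Ioc 0 r₀) r with hD
    have hD_nonneg : 0 ≤ D := hω_deriv_nonneg r (hr_mem l hl)
    have h_pow : HasDerivWithinAt (fun x : ℝ => x ^ c) (c * l ^ (c - 1))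
        (Set.Ici lam₀) l :=
      (Real.hasDerivAt_rpow_const (Or.inl hl0.ne')).hasDerivWithinAt
    have h_ω : HasDerivWithinAt ω D (Set.Ioc 0 r₀) r :=
      ((hω_diff r (hr_mem l hl)).hasDerivWithinAt)
    have hmaps : Set.MapsTo (fun x : ℝ => x ^ c) (Set.Ici lam₀) (Set.Ioc 0 r₀) :=
      fun x hx => hr_mem x hx
    have h_g : HasDerivWithinAt (fun x : ℝ => ω (x ^ c)) (D * (c * l ^ (c - 1)))
        (Set.Ici lam₀) l := h_ω.comp l h_pow hmaps
    have h_log : HasDerivWithinAt Real.log l⁻¹ (Set.Ici lam₀) l :=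
      (Real.hasDerivAt_log hl0.ne').hasDerivWithinAt
    have h_mul : HasDerivWithinAt (fun x : ℝ => (1 - ω (x ^ c)) * Real.log x)
        ((0 - D * (c * l ^ (c - 1))) * Real.log l + (1 - ω r) * l⁻¹)
        (Set.Ici lam₀) l :=
      ((hasDerivWithinAt_const l _ (1:ℝ)).sub h_g).mul h_log
    have h_exp : HasDerivWithinAt (fun x : ℝ => Real.exp ((1 - ω (x ^ c)) * Real.log x))
        (Real.exp ((1 - ω r) * Real.log l) *
          ((0 - D * (c * l ^ (c - 1))) * Real.log l + (1 - ω r) * l⁻¹))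
        (Set.Ici lam₀) l := h_mul.exp
    have heq : Set.EqOn s (fun x : ℝ => Real.exp ((1 - ω (x ^ c)) * Real.log x))
        (Set.Ici lam₀) := by
      intro x hx
      rw [hs' x hx, Real.rpow_def_of_pos (hl_pos x hx), mul_comm]
    have hders : HasDerivWithinAt s
        (Real.exp ((1 - ω r) * Real.log l) *
          ((0 - D * (c * l ^ (c - 1))) * Real.log l + (1 - ω r) * l⁻¹))
        (Set.Ici lam₀) l := h_exp.congr heq (heq hl)
    have hterm1 : 0 ≤ (0 - D * (c * l ^ (c - 1))) * Real.log l := by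
      have h1 : D * (c * l ^ (c - 1)) ≤ 0 := by
        have : c * l ^ (c - 1) ≤ 0 :=
          mul_nonpos_of_nonpos_of_nonneg hc_neg.le (Real.rpow_pos_of_pos hl0 _).le
        exact mul_nonpos_of_nonneg_of_nonpos hD_nonneg this
      have h2 : 0 ≤ Real.log l := Real.log_nonneg (hl_gt1 l hl).le
      exact mul_nonneg (by linarith) h2
    have hterm2 : 0 < (1 - ω r) * l⁻¹ :=
      mul_pos (by linarith [hωr_le l hl]) (inv_pos.2 hl0)
    refine ⟨_, hders, ?_, ?_⟩
    · -- lower bound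
      have hE : Real.exp ((1 - ω r) * Real.log l) = l ^ (1 - ω r) := by
        rw [Real.rpow_def_of_pos hl0, mul_comm]
      have hkey : l ^ (1 - ω r) * ((1 - ω r) * l⁻¹) = (1 - ω r) / a l := by
        rw [Real.rpow_sub hl0, Real.rpow_one, ha l hl]
        have hla : (0:ℝ) < l ^ (ω r) := Real.rpow_pos_of_pos hl0 _
        field_simp
        ring
      have hωr1 : ω r ≤ ω r₀ := hωr_le l hl
      have step : (1 - ω r) / a l ≤
          Real.exp ((1 - ω r) * Real.log l) *
            ((0 - D * (c * l ^ (c - 1))) * Real.log l + (1 - ω r) * l⁻¹) := by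
        have hEpos : 0 ≤ l ^ (1 - ω r) := (Real.rpow_pos_of_pos hl0 _).le
        rw [hE, mul_add]
        calc (1 - ω r) / a l = l ^ (1 - ω r) * ((1 - ω r) * l⁻¹) := hkey.symm
          _ ≤ _ := le_add_of_nonneg_left (mul_nonneg hEpos hterm1)
      refine le_trans ?_ step
      exact (div_le_div_iff_of_pos_right (ha_pos l hl)).2 (by linarith)
    · exact mul_pos (Real.exp_pos _) (add_pos_of_nonneg_of_pos hterm1 hterm2)
  -- continuity
  have hcont : ContinuousOn s (Set.Ici lam₀) := by
    intro x hx
    obtain ⟨d, hd, -, -⟩ := part2 x hx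
    exact hd.continuousWithinAt
  -- strict mono
  have hsm : StrictMonoOn s (Set.Ici lam₀) := by
    apply strictMonoOn_of_deriv_pos (convex_Ici lam₀) hcont
    intro x hx
    rw [interior_Ici] at hx
    obtain ⟨d, hd, -, hdpos⟩ := part2 x (le_of_lt hx)
    have hda : HasDerivAt s d x := hd.hasDerivAt (Ici_mem_nhds hx)
    rw [hda.deriv]
    exact hdpos
  refine ⟨part1, part2, hsm, ?_⟩
  have hω₀1 : 0 ≤ 1 - ω r₀ := by linarith
  have hmapsTo : Set.MapsTo s (Set.Ici lam₀) (Set.Ici (lam₀ ^ (1 - ω r₀))) := by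
    intro x hx
    have h1 : lam₀ ^ (1 - ω r₀) ≤ x ^ (1 - ω r₀) :=
      Real.rpow_le_rpow hlam₀_pos.le hx hω₀1
    exact Set.mem_Ici.2 (le_trans h1 (part1 x hx))
  refine ⟨hmapsTo, hsm.injOn, ?_⟩
  intro y hy
  have hy' : lam₀ ^ (1 - ω r₀) ≤ y := hy
  have hs_lam₀ : s lam₀ = lam₀ ^ (1 - ω r₀) := by
    rw [hs' lam₀ le_rfl, hpowlam]
  have hy_pos : 0 < y := lt_of_lt_of_le (Real.rpow_pos_of_pos hlam₀_pos _) hy'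
  set b := max lam₀ (y ^ (1/(1 - ω r₀))) with hbdef
  have hb : lam₀ ≤ b := le_max_left _ _
  have hsb : y ≤ s b := by
    have h1 : y ^ (1/(1 - ω r₀)) ≤ b := le_max_right _ _
    have h2 : (y ^ (1/(1 - ω r₀))) ^ (1 - ω r₀) ≤ b ^ (1 - ω r₀) :=
      Real.rpow_le_rpow (Real.rpow_nonneg hy_pos.le _) h1 hω₀1
    have h3 : (y ^ (1/(1 - ω r₀))) ^ (1 - ω r₀) = y := by
      rw [← Real.rpow_mul hy_pos.le,
        one_div_mul_cancel (by linarith : (1:ℝ) - ω r₀ ≠ 0), Real.rpow_one]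
    calc y = (y ^ (1/(1 - ω r₀))) ^ (1 - ω r₀) := h3.symm
      _ ≤ b ^ (1 - ω r₀) := h2
      _ ≤ s b := part1 b hb
  have hIVT := intermediate_value_Icc hb (hcont.mono Set.Icc_subset_Ici_self)
  have hyIcc : y ∈ Set.Icc (s lam₀) (s b) := ⟨hs_lam₀ ▸ hy', hsb⟩
  obtain ⟨x, hx, hxy⟩ := hIVT hyIcc
  exact ⟨x, Set.Icc_subset_Ici_self hx, hxy⟩
end

section
/- Let φ:[0,∞)→(0,∞) be an increasing C¹ function with φ(s)=exp(θ(1-ω₀)∫_{s₀/(4c)}^s dt/(t·a^q(t))) for all s ≥ s₀/(4c), where θ>0 and c>0 are constants. Assume M(k)<∞ for all k>0 as above. Then for each k>0 there exists a constant L(k)>0 such that φ(ks) ≤ L(k)·φ(s) for all s ≥ 0. -/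
/-!
For `k ≤ 1` monotonicity of `φ` suffices. For `k > 1` and `s` large, the exponential form gives
`φ (k s) = exp (θ (1 - ω₀) ∫_s^{ks} dt / (t a^q)) φ s`, and since the integrand is nonnegative
and `k s ≤ Λ (k s)`, that integral is at most `M(k)`. On the remaining bounded range `[0, T]`,
monotonicity gives `φ (k s) ≤ φ (k T)` and `φ 0 ≤ φ s`.
-/

open Real Set MeasureTheory intervalIntegral Filter

lemma exists_forall_le_mul_of_eventually_le_mul {φ : ℝ → ℝ} {k C : ℝ} (hk : 0 ≤ k)
    (hφ_pos : ∀ s ≥ (0:ℝ), 0 < φ s) (hφ_mono : MonotoneOn φ (Ici 0))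
    (hlarge : ∀ᶠ s in atTop, φ (k * s) ≤ C * φ s) :
    ∃ L : ℝ, 0 < L ∧ ∀ s ≥ (0:ℝ), φ (k * s) ≤ L * φ s := by
  obtain ⟨T₁, hT₁⟩ := eventually_atTop.mp hlarge
  set T := max T₁ 0
  have hkT : 0 ≤ k * T := mul_nonneg hk (le_max_right _ _)
  have hφ0 := hφ_pos 0 le_rfl
  refine ⟨max C (φ (k * T) / φ 0), lt_max_of_lt_right (div_pos (hφ_pos _ hkT) hφ0),
    fun s hs => ?_⟩
  have hφs := hφ_pos s hs
  rcases le_or_gt T₁ s with hsT | hsT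
  · exact (hT₁ s hsT).trans (by gcongr; exact le_max_left _ _)
  · have hks : φ (k * s) ≤ φ (k * T) :=
      hφ_mono (mul_nonneg hk hs) hkT (by gcongr; exact hsT.le.trans (le_max_left _ _))
    have h0s : φ 0 ≤ φ s := hφ_mono (le_refl (0:ℝ)) hs hs
    calc φ (k * s) ≤ φ (k * T) / φ 0 * φ s := by
          rw [div_mul_eq_mul_div, le_div_iff₀ hφ0]
          exact mul_le_mul hks h0s hφ0.le (hφ_pos _ hkT).le
      _ ≤ _ := by gcongr; exact le_max_right _ _

lemma le_exp_mul_of_eq_exp_integral {φ f : ℝ → ℝ} {C S₀ s t B : ℝ} (hC : 0 ≤ C)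
    (hφ : ∀ s ≥ S₀, φ s = exp (C * ∫ u in S₀..s, f u))
    (hf : ∀ x ≥ S₀, IntervalIntegrable f volume S₀ x)
    (hs : S₀ ≤ s) (ht : S₀ ≤ t) (hB : ∫ u in s..t, f u ≤ B) :
    φ t ≤ exp (C * B) * φ s := by
  have hsplit : ∫ u in S₀..t, f u = (∫ u in s..t, f u) + ∫ u in S₀..s, f u := by
    rw [← integral_interval_sub_left (hf t ht) (hf s hs)]
    ring
  rw [hφ t ht, hφ s hs, hsplit, mul_add, exp_add]
  gcongr

lemma continuousOn_one_div_mul_rpow {a : ℝ → ℝ} (q : ℝ) (ha_pos : ∀ t, 0 < a t)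
    (ha_cont : Continuous a) : ContinuousOn (fun t => 1 / (t * a t ^ q)) (Ioi 0) := by
  refine continuousOn_const.div ?_ fun t (ht : 0 < t) =>
    (mul_pos ht (rpow_pos_of_pos (ha_pos t) q)).ne'
  exact (continuous_id.mul (ha_cont.rpow_const fun t => Or.inl (ha_pos t).ne')).continuousOn

lemma ContinuousOn.intervalIntegrable_of_pos {f : ℝ → ℝ} (hf : ContinuousOn f (Ioi 0))
    {x y : ℝ} (hx : 0 < x) (hy : 0 < y) : IntervalIntegrable f volume x y :=
  (hf.mono fun _ ht => lt_of_lt_of_le (lt_min hx hy) ht.1).intervalIntegrable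

theorem stmt3_general (q s₀ ω₀ θ c : ℝ) (a Λ φ : ℝ → ℝ)
    (hω₀ : ω₀ ∈ Set.Ioo (0:ℝ) 1) (hθ : 0 < θ) (hc : 0 < c)
    (hs₀ : 0 < s₀)
    (ha_pos : ∀ t, 0 < a t) (ha_cont : Continuous a)
    (hΛ_ge : ∀ t ≥ s₀, Λ t ≥ t)
    (hM : ∀ k : ℝ, 0 < k →
      ∃ M : ℝ, ∀ s ≥ s₀ / k, (∫ t in s..(Λ (k * s)), 1 / (t * a t ^ q)) ≤ M)
    (hφ_pos : ∀ s ≥ (0:ℝ), 0 < φ s)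
    (hφ_mono : MonotoneOn φ (Set.Ici 0))
    (hφ_eq : ∀ s ≥ s₀ / (4 * c),
      φ s = Real.exp (θ * (1 - ω₀) * ∫ t in (s₀ / (4 * c))..s, 1 / (t * a t ^ q))) :
    ∀ k : ℝ, 0 < k → ∃ L : ℝ, 0 < L ∧ ∀ s ≥ (0:ℝ), φ (k * s) ≤ L * φ s := by
  intro k hk
  have hf := continuousOn_one_div_mul_rpow q ha_pos ha_cont
  have hS₀ : 0 < s₀ / (4 * c) := by positivity
  rcases le_or_gt k 1 with hk1 | hk1
  · refine exists_forall_le_mul_of_eventually_le_mul (C := 1) hk.le hφ_pos hφ_mono ?_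
    filter_upwards [eventually_ge_atTop 0] with s hs
    rw [one_mul]
    exact hφ_mono (mul_nonneg hk.le hs) hs (mul_le_of_le_one_left hs hk1)
  obtain ⟨M, hMk⟩ := hM k hk
  refine exists_forall_le_mul_of_eventually_le_mul (C := exp (θ * (1 - ω₀) * M)) hk.le hφ_pos
    hφ_mono ?_
  filter_upwards [eventually_ge_atTop (s₀ / (4 * c)), eventually_ge_atTop (s₀ / k)]
    with s hsS₀ hsk
  have hs : 0 < s := hS₀.trans_le hsS₀
  have hks : s ≤ k * s := le_mul_of_one_le_left hs.le hk1.le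
  have hΛ : k * s ≤ Λ (k * s) := hΛ_ge _ ((div_le_iff₀' hk).mp hsk)
  have hint : ∫ t in s..k * s, 1 / (t * a t ^ q) ≤ M :=
    (integral_mono_interval le_rfl hks hΛ
      (ae_restrict_of_forall_mem measurableSet_Ioc fun t ht =>
        (one_div_pos.mpr (mul_pos (hs.trans ht.1) (rpow_pos_of_pos (ha_pos t) q))).le)
      (hf.intervalIntegrable_of_pos hs (hs.trans_le (hks.trans hΛ)))).trans (hMk s hsk)
  exact le_exp_mul_of_eq_exp_integral (mul_nonneg hθ.le (sub_nonneg.mpr hω₀.2.le)) hφ_eq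
    (fun x hx => hf.intervalIntegrable_of_pos hS₀ (hS₀.trans_le hx)) hsS₀ (hsS₀.trans hks)
    hint

theorem stmt3 (q lam₀ s₀ ω₀ θ c : ℝ) (a Λ φ : ℝ → ℝ)
    (hq : 1 < q) (hω₀ : ω₀ ∈ Set.Ioo (0:ℝ) 1) (hθ : 0 < θ) (hc : 0 < c)
    (hs₀ : 0 < s₀) (hlam₀ : 1 < lam₀) (hs₀lam₀ : s₀ ≤ lam₀)
    (ha_pos : ∀ t, 0 < a t) (ha_cont : Continuous a)
    (hΛ_ge : ∀ t ≥ s₀, Λ t ≥ t)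
    (hΛ_inv : ∀ l ≥ lam₀, Λ (l / a l) = l)
    (hM : ∀ k : ℝ, 0 < k →
      ∃ M : ℝ, ∀ s ≥ s₀ / k, (∫ t in s..(Λ (k * s)), 1 / (t * a t ^ q)) ≤ M)
    (hφ_pos : ∀ s ≥ (0:ℝ), 0 < φ s)
    (hφ_mono : MonotoneOn φ (Set.Ici 0))
    (hφ_C1 : ContDiffOn ℝ 1 φ (Set.Ici 0))
    (hφ_eq : ∀ s ≥ s₀ / (4 * c),
      φ s = Real.exp (θ * (1 - ω₀) * ∫ t in (s₀ / (4 * c))..s, 1 / (t * a t ^ q))) :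
    ∀ k : ℝ, 0 < k → ∃ L : ℝ, 0 < L ∧ ∀ s ≥ (0:ℝ), φ (k * s) ≤ L * φ s :=
  stmt3_general q s₀ ω₀ θ c a Λ φ hω₀ hθ hc hs₀ ha_pos ha_cont hΛ_ge hM hφ_pos hφ_mono hφ_eq
end

section
/- (Measure density of the complement under exterior cone condition.) Let Ω ⊂ ℝⁿ be a bounded domain satisfying the uniform exterior cone condition with radius r̄ > 0 and cone C₀. Then there exists γ ∈ (0,1) such that for all r ∈ (0, r̄) and all x₀ ∈ ℝⁿ: if B_{3r/4}(x₀) ∩ Ωᶜ ≠ ∅, then |B_r(x₀) ∩ Ωᶜ| ≥ γ|B_r|. -/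
open Real Set MeasureTheory Metric Pointwise

/-!
If `B_{3r/4}(x₀)` misses `∂Ω`, connectedness puts the whole ball in `Ωᶜ`. Otherwise a boundary
point `y₀` in it carries an exterior cone whose truncation at height `r/4` lies in
`B_r(x₀) ∩ Ωᶜ`. In both cases `|B_r(x₀) ∩ Ωᶜ| ≥ |B_{r/4} ∩ C₀| = rⁿ |B_{1/4} ∩ C₀|`, by invariance
of Lebesgue measure under rigid motions and homogeneity of the cone, so
`γ = |B_{1/4} ∩ C₀| / |B_1|` works.
-/

theorem IsPreconnected.subset_compl_of_disjoint_frontier {X : Type*} [TopologicalSpace X]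
    {s t : Set X} (hs : IsPreconnected s) (hfr : Disjoint s (frontier t))
    (hst : (s \ t).Nonempty) : s ⊆ tᶜ := by
  have hcover : s ⊆ interior t ∪ (closure t)ᶜ := fun x hx => by
    by_contra h
    simp only [mem_union, mem_compl_iff, not_or, not_not] at h
    exact hfr.notMem_of_mem_left hx ⟨h.2, h.1⟩
  have hdisj : Disjoint (interior t) (closure t)ᶜ :=
    disjoint_compl_right_iff_subset.2 (interior_subset.trans subset_closure)
  obtain ⟨x, hxs, hxt⟩ := hst
  rcases hs.subset_or_subset isOpen_interior isClosed_closure.isOpen_compl hdisj hcover with h | h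
  · exact absurd (interior_subset (h hxs)) hxt
  · exact h.trans (compl_subset_compl.2 subset_closure)

section AddHaar

variable {E : Type*} [NormedAddCommGroup E] [NormedSpace ℝ E] [MeasurableSpace E] [BorelSpace E]
  [FiniteDimensional ℝ E] (μ : Measure E) [μ.IsAddHaarMeasure]

theorem addHaar_ball_zero_inter_cone {C : Set E} (hC : ∀ c : ℝ, 0 < c → c • C = C) {r : ℝ}
    (hr : 0 < r) (s : ℝ) :
    μ (ball 0 (r * s) ∩ C) = ENNReal.ofReal (r ^ Module.finrank ℝ E) * μ (ball 0 s ∩ C) := by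
  rw [← Measure.addHaar_smul_of_nonneg μ hr.le, smul_set_inter₀ hr.ne', hC r hr,
    _root_.smul_ball hr.ne', smul_zero, Real.norm_of_nonneg hr.le]

theorem addHaar_ball_lt_addHaar_ball [Nontrivial E] (x : E) {s t : ℝ} (hs : 0 ≤ s) (hst : s < t) :
    μ (ball x s) < μ (ball x t) := by
  rw [Measure.addHaar_ball μ x hs, Measure.addHaar_ball μ x (hs.trans hst.le)]
  refine ENNReal.mul_lt_mul_left (measure_ball_pos μ 0 one_pos).ne' measure_ball_lt_top.ne ?_
  exact (ENNReal.ofReal_lt_ofReal_iff (pow_pos (hs.trans_lt hst) _)).2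
    (pow_lt_pow_left₀ hst hs Module.finrank_pos.ne')

end AddHaar

section ExteriorCone

variable {E : Type*} [NormedAddCommGroup E] [InnerProductSpace ℝ E] [FiniteDimensional ℝ E]
  [MeasurableSpace E] [BorelSpace E]

theorem volume_ball_inter_image_isometry (y : E) (R : E ≃ₗᵢ[ℝ] E) (C : Set E) (ρ : ℝ) :
    volume (ball y ρ ∩ (fun z => y + R z) '' C) = volume (ball 0 ρ ∩ C) := by
  have hball : ball y ρ = (fun z => y + R z) '' ball 0 ρ := by
    rw [← image_image (y + ·) R, R.image_ball, map_zero, image_add_left, preimage_add_ball,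
      sub_neg_eq_add, zero_add]
  rw [hball, ← image_inter (fun a b h => R.injective (add_left_cancel h)), ← image_image (y + ·) R,
    image_add_left, measure_preimage_add, R.image_eq_preimage_symm,
    R.symm.measurePreserving.measure_preimage_emb R.symm.toHomeomorph.measurableEmbedding]

theorem volume_ball_inter_cone_le_volume_ball_inter_compl {Ω C : Set E} {ρ : ℝ}
    (hcone : ∀ y ∈ frontier Ω, ∃ R : E ≃ₗᵢ[ℝ] E, ball y ρ ∩ (fun z => y + R z) '' C ⊆ Ωᶜ)
    {r : ℝ} (hrρ : r / 4 ≤ ρ) {x₀ : E} (hne : (ball x₀ (3 * r / 4) ∩ Ωᶜ).Nonempty) :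
    volume (ball 0 (r / 4) ∩ C) ≤ volume (ball x₀ r ∩ Ωᶜ) := by
  have hr : 0 < r := by linarith [pos_of_mem_ball hne.some_mem.1]
  by_cases hfr : Disjoint (ball x₀ (3 * r / 4)) (frontier Ω)
  · have hsub : ball x₀ (3 * r / 4) ⊆ ball x₀ r ∩ Ωᶜ :=
      subset_inter (ball_subset_ball (by linarith))
        ((convex_ball x₀ _).isPreconnected.subset_compl_of_disjoint_frontier hfr hne)
    calc volume (ball 0 (r / 4) ∩ C)
        ≤ volume (ball x₀ (r / 4)) := by
          rw [Measure.addHaar_ball_center]; exact measure_mono inter_subset_left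
      _ ≤ volume (ball x₀ (3 * r / 4)) := measure_mono (ball_subset_ball (by linarith))
      _ ≤ volume (ball x₀ r ∩ Ωᶜ) := measure_mono hsub
  · obtain ⟨y₀, hy₀, hy₀Ω⟩ := not_disjoint_iff.1 hfr
    obtain ⟨R, hR⟩ := hcone y₀ hy₀Ω
    have hsub : ball y₀ (r / 4) ∩ (fun z => y₀ + R z) '' C ⊆ ball x₀ r ∩ Ωᶜ :=
      fun z ⟨hz, hzC⟩ => ⟨ball_subset_ball' (by linarith [mem_ball.1 hy₀]) hz,
        hR ⟨ball_subset_ball hrρ hz, hzC⟩⟩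
    rw [← volume_ball_inter_image_isometry y₀ R]
    exact measure_mono hsub

end ExteriorCone

theorem stmt16_general (n : ℕ) (hn : 1 ≤ n)
    (Ω C₀ : Set (EuclideanSpace ℝ (Fin n))) (rbar : ℝ)
    -- `C₀` is a cone with vertex 0:
    (hC₀_cone : ∀ c : ℝ, 0 < c → c • C₀ = C₀)
    (hC₀_pos : 0 < volume (Metric.ball (0 : EuclideanSpace ℝ (Fin n)) (1/4) ∩ C₀))
    -- uniform exterior cone condition:
    (hcone : ∀ y ∈ frontier Ω,
      ∃ R : EuclideanSpace ℝ (Fin n) ≃ₗᵢ[ℝ] EuclideanSpace ℝ (Fin n),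
        (Metric.ball y rbar ∩ ((fun z => y + R z) '' C₀)) ⊆ Ωᶜ) :
    ∃ γ ∈ Set.Ioo (0:ℝ) 1, ∀ (r : ℝ) (x₀ : EuclideanSpace ℝ (Fin n)),
      0 < r → r < rbar → (Metric.ball x₀ (3 * r / 4) ∩ Ωᶜ).Nonempty →
      ENNReal.ofReal γ * volume (Metric.ball x₀ r)
        ≤ volume (Metric.ball x₀ r ∩ Ωᶜ) := by
  have : Nontrivial (EuclideanSpace ℝ (Fin n)) :=
    Module.nontrivial_of_finrank_pos (R := ℝ) (by rw [finrank_euclideanSpace_fin]; omega)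
  set v := volume (ball (0 : EuclideanSpace ℝ (Fin n)) (1 / 4) ∩ C₀)
  set V := volume (ball (0 : EuclideanSpace ℝ (Fin n)) 1)
  have hV : V ≠ 0 := (measure_ball_pos _ _ one_pos).ne'
  have hV_top : V ≠ ⊤ := measure_ball_lt_top.ne
  have hvV : v < V := (measure_mono inter_subset_left).trans_lt
    (addHaar_ball_lt_addHaar_ball _ _ (by norm_num) (by norm_num))
  have hγ : ENNReal.ofReal (v / V).toReal = v / V :=
    ENNReal.ofReal_toReal (ENNReal.div_lt_top (hvV.trans_le le_top).ne hV).ne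
  refine ⟨(v / V).toReal, ⟨?_, ?_⟩, fun r x₀ hr hr_rbar hne => ?_⟩
  · exact ENNReal.toReal_pos (ENNReal.div_ne_zero.2 ⟨hC₀_pos.ne', hV_top⟩) (hγ ▸ ENNReal.ofReal_ne_top)
  · refine ENNReal.toReal_lt_of_lt_ofReal ?_
    rwa [ENNReal.ofReal_one, ENNReal.div_lt_iff (Or.inl hV) (Or.inl hV_top), one_mul]
  calc ENNReal.ofReal (v / V).toReal * volume (ball x₀ r)
      = volume (ball 0 (r * (1 / 4)) ∩ C₀) := by
        rw [hγ, addHaar_ball_zero_inter_cone _ hC₀_cone hr, Measure.addHaar_ball _ _ hr.le,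
          mul_left_comm, ENNReal.div_mul_cancel hV hV_top]
    _ ≤ volume (ball x₀ r ∩ Ωᶜ) := by
        rw [mul_one_div]
        exact volume_ball_inter_cone_le_volume_ball_inter_compl hcone (by linarith) hne

theorem stmt16 (n : ℕ) (hn : 1 ≤ n)
    (Ω C₀ : Set (EuclideanSpace ℝ (Fin n))) (rbar : ℝ)
    (hΩ : IsOpen Ω) (hΩne : Ω.Nonempty) (hΩb : Bornology.IsBounded Ω)
    (hrbar : 0 < rbar)
    -- `C₀` is a cone with vertex 0:
    (hC₀_cone : ∀ c : ℝ, 0 < c → c • C₀ = C₀)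
    (hC₀_meas : MeasurableSet C₀)
    (hC₀_pos : 0 < volume (Metric.ball (0 : EuclideanSpace ℝ (Fin n)) (1/4) ∩ C₀))
    -- uniform exterior cone condition:
    (hcone : ∀ y ∈ frontier Ω,
      ∃ R : EuclideanSpace ℝ (Fin n) ≃ₗᵢ[ℝ] EuclideanSpace ℝ (Fin n),
        (Metric.ball y rbar ∩ ((fun z => y + R z) '' C₀)) ⊆ Ωᶜ) :
    ∃ γ ∈ Set.Ioo (0:ℝ) 1, ∀ (r : ℝ) (x₀ : EuclideanSpace ℝ (Fin n)),
      0 < r → r < rbar → (Metric.ball x₀ (3 * r / 4) ∩ Ωᶜ).Nonempty →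
      ENNReal.ofReal γ * volume (Metric.ball x₀ r)
        ≤ volume (Metric.ball x₀ r ∩ Ωᶜ) :=
  stmt16_general n hn Ω C₀ rbar hC₀_cone hC₀_pos hcone
end

section
/- Both the logarithmic modulus ω(r) = k/ln(1/r) (for k ≥ 0, on small r) and the nonlogarithmic modulus ω(r) = L·(ln ln(1/r))/ln(1/r) (for 0 < L ≤ 1/n) satisfy the condition: sup{∫_s^{λ(ks)} dt/(t·a^q(t)) : s ≥ λ₀} < ∞ for all k ≥ 1, and moreover ∫_{λ₀}^∞ dt/(t·a^q(t)) = ∞, where a(λ) = λ^{ω(λ^{-q/n})} for λ ≥ λ₀ and λ(s) is the inverse of s(λ)=λ/a(λ). -/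
open Real Set MeasureTheory intervalIntegral Filter

/-- The function `a(λ) = λ^{ω(λ^{-q/n})}` for `λ ≥ λ₀ = r₀^{-n/q}`, extended by the
constant `λ₀^{ω(r₀)}` below `λ₀`. -/
noncomputable def aFun (n : ℕ) (q r₀ : ℝ) (ω : ℝ → ℝ) (t : ℝ) : ℝ :=
  if r₀ ^ (-(n:ℝ) / q) ≤ t then t ^ (ω (t ^ (-(q / (n:ℝ)))))
  else (r₀ ^ (-(n:ℝ) / q)) ^ ω r₀

/-- Condition (1.8) of the paper (for all `k ≥ 1`) together with the divergence
`∫_{λ₀}^∞ dt/(t a^q(t)) = ∞`, stated for any inverse `Λ` of `s(λ) = λ / a(λ)`. -/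
def GehringCond (n : ℕ) (q r₀ : ℝ) (ω : ℝ → ℝ) : Prop :=
  ∀ Λ : ℝ → ℝ,
    StrictMonoOn (fun t => t / aFun n q r₀ ω t) (Set.Ici (r₀ ^ (-(n:ℝ) / q))) →
    (∀ t ≥ r₀ ^ (-(n:ℝ) / q), Λ (t / aFun n q r₀ ω t) = t) →
    ((∀ K : ℝ, 1 ≤ K → ∃ C : ℝ, ∀ s ≥ r₀ ^ (-(n:ℝ) / q),
        (∫ t in s..(Λ (K * s)), 1 / (t * aFun n q r₀ ω t ^ q)) ≤ C) ∧
      Filter.Tendsto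
        (fun b => ∫ t in (r₀ ^ (-(n:ℝ) / q))..b, 1 / (t * aFun n q r₀ ω t ^ q))
        Filter.atTop Filter.atTop)

/-!
For `t ≥ λ₀` the function `a` has a closed form: the constant `e^{kn/q}` for the logarithmic
modulus and `(c ln t)^{Ln/q}` with `c = q/n` for the log-log one; in both cases `a ≥ 1` is
continuous and nondecreasing, and `t / a t → ∞`. Hence `Λ(Ks)` is a point `t ≥ s` with
`t = K s a(t)`, and since `a(τ) ≥ a(s)` on `[s, t]` the integral is at most
`log (t / s) / a(s)^q = (log K + log a(t)) / a(s)^q`. In the log-log case `x = c ln t` solves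
`x = c ln s + c ln K + L ln x`, so `x ≤ 2 (1 + c ln K) c ln s`, and `log x` is absorbed by
`a(s)^q = (c ln s)^{Ln}`. Divergence follows from `a^q ≤ C ln t`, which makes the integral at
least `C⁻¹ ln ln b`.
-/

lemma integral_one_div_mul_rpow_le {a : ℝ → ℝ} {q s t : ℝ} (hq : 0 ≤ q) (hs : 0 < s)
    (hst : s ≤ t) (hcont : ContinuousOn a (Icc s t)) (hmono : MonotoneOn a (Icc s t))
    (ha : 0 < a s) :
    ∫ τ in s..t, 1 / (τ * a τ ^ q) ≤ log (t / s) / a s ^ q := by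
  have hτ0 : ∀ τ ∈ Icc s t, 0 < τ := fun τ hτ => hs.trans_le hτ.1
  have hle : ∀ τ ∈ Icc s t, a s ≤ a τ := fun τ hτ => hmono ⟨le_rfl, hst⟩ hτ hτ.1
  calc ∫ τ in s..t, 1 / (τ * a τ ^ q) ≤ ∫ τ in s..t, (a s ^ q)⁻¹ * τ⁻¹ := by
        refine integral_mono_on hst (ContinuousOn.intervalIntegrable ?_)
          (ContinuousOn.intervalIntegrable ?_) fun τ hτ => ?_
        · rw [uIcc_of_le hst]
          refine continuousOn_const.div (continuousOn_id.mul
            (hcont.rpow_const fun _ _ => Or.inr hq)) fun τ hτ => ?_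
          exact (mul_pos (hτ0 τ hτ) (rpow_pos_of_pos (ha.trans_le (hle τ hτ)) q)).ne'
        · rw [uIcc_of_le hst]
          exact continuousOn_const.mul (continuousOn_inv₀.mono fun τ hτ => (hτ0 τ hτ).ne')
        · rw [one_div, mul_inv, mul_comm]
          have := hτ0 τ hτ
          gcongr
          exact hle τ hτ
    _ = log (t / s) / a s ^ q := by
        rw [intervalIntegral.integral_const_mul, integral_inv_of_pos hs (hs.trans_le hst),
          inv_mul_eq_div]

lemma le_integral_one_div_mul {g : ℝ → ℝ} {C a b : ℝ} (ha : 1 < a) (hab : a ≤ b)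
    (hg : ContinuousOn g (Icc a b)) (hpos : ∀ t ∈ Icc a b, 0 < g t)
    (hle : ∀ t ∈ Icc a b, g t ≤ C * log t) :
    C⁻¹ * (log (log b) - log (log a)) ≤ ∫ t in a..b, 1 / (t * g t) := by
  have ht0 : ∀ t ∈ Icc a b, 0 < t := fun t ht => by linarith [ht.1]
  rw [← integral_inv_div_log ha (ha.trans_le hab), ← intervalIntegral.integral_const_mul]
  refine integral_mono_on hab (ContinuousOn.intervalIntegrable ?_)
    (ContinuousOn.intervalIntegrable ?_) fun t ht => ?_
  · rw [uIcc_of_le hab]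
    refine continuousOn_const.mul ((continuousOn_inv₀.mono fun t ht => (ht0 t ht).ne').div
      (continuousOn_log.mono fun t ht => (ht0 t ht).ne') fun t ht => ?_)
    exact (log_pos (ha.trans_le ht.1)).ne'
  · rw [uIcc_of_le hab]
    exact continuousOn_const.div (continuousOn_id.mul hg)
      fun t ht => (mul_pos (ht0 t ht) (hpos t ht)).ne'
  · calc C⁻¹ * (t⁻¹ / log t) = 1 / (t * (C * log t)) := by ring
      _ ≤ 1 / (t * g t) := by
        have := ht0 t ht
        have := hpos t ht
        gcongr
        exact hle t ht

lemma tendsto_integral_one_div_mul_atTop {g : ℝ → ℝ} {C t₀ : ℝ} (ht₀ : 1 < t₀)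
    (hg : ContinuousOn g (Ici t₀)) (hpos : ∀ t ≥ t₀, 0 < g t)
    (hle : ∀ t ≥ t₀, g t ≤ C * log t) :
    Tendsto (fun b => ∫ t in t₀..b, 1 / (t * g t)) atTop atTop := by
  have hC : 0 < C := pos_of_mul_pos_left ((hpos t₀ le_rfl).trans_le (hle t₀ le_rfl))
    (log_pos ht₀).le
  have hloglog : Tendsto (fun b => C⁻¹ * (log (log b) - log (log t₀))) atTop atTop :=
    (tendsto_atTop_add_const_right _ _ (tendsto_log_atTop.comp tendsto_log_atTop)).const_mul_atTop
      (inv_pos.2 hC)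
  refine tendsto_atTop_mono' atTop ?_ hloglog
  filter_upwards [eventually_ge_atTop t₀] with b hb
  exact le_integral_one_div_mul ht₀ hb (hg.mono Icc_subset_Ici_self)
    (fun t ht => hpos t ht.1) fun t ht => hle t ht.1

section Inverse

variable {a Λ : ℝ → ℝ} {t₀ : ℝ}

lemma exists_eq_mul_apply_of_tendsto (ht₀ : 0 < t₀) (hcont : ContinuousOn a (Ici t₀))
    (hone : ∀ t ≥ t₀, 1 ≤ a t) (htend : Tendsto (fun t => t / a t) atTop atTop)
    (hΛ : ∀ t ≥ t₀, Λ (t / a t) = t) {x : ℝ} (hx : t₀ ≤ x) :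
    ∃ t, x ≤ t ∧ t = x * a t ∧ Λ x = t := by
  obtain ⟨T, hxT, hT⟩ :=
    ((htend.eventually (eventually_ge_atTop x)).and (eventually_ge_atTop t₀)).exists
  have hcont' : ContinuousOn (fun t => t / a t) (Icc t₀ T) :=
    continuousOn_id.div (hcont.mono Icc_subset_Ici_self) fun t ht =>
      (zero_lt_one.trans_le (hone t ht.1)).ne'
  have hlow : t₀ / a t₀ ≤ x := (div_le_self ht₀.le (hone t₀ le_rfl)).trans hx
  obtain ⟨t, ht, htx⟩ := intermediate_value_Icc hT hcont' ⟨hlow, hxT⟩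
  have hat : 1 ≤ a t := hone t ht.1
  have ht_eq : t = x * a t := (div_eq_iff (by positivity)).1 htx
  refine ⟨t, ?_, ht_eq, htx ▸ hΛ t ht.1⟩
  rw [ht_eq]
  exact le_mul_of_one_le_right (ht₀.le.trans hx) hat

lemma exists_integral_le_of_tendsto {q : ℝ} (hq : 0 ≤ q) (ht₀ : 0 < t₀)
    (hcont : ContinuousOn a (Ici t₀)) (hmono : MonotoneOn a (Ici t₀))
    (hone : ∀ t ≥ t₀, 1 ≤ a t) (htend : Tendsto (fun t => t / a t) atTop atTop)
    (hΛ : ∀ t ≥ t₀, Λ (t / a t) = t) {K s : ℝ} (hK : 1 ≤ K) (hs : t₀ ≤ s) :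
    ∃ t, s ≤ t ∧ t = K * s * a t ∧
      ∫ τ in s..Λ (K * s), 1 / (τ * a τ ^ q) ≤ (log K + log (a t)) / a s ^ q := by
  have hs0 : 0 < s := ht₀.trans_le hs
  have hsKs : s ≤ K * s := le_mul_of_one_le_left hs0.le hK
  obtain ⟨t, hKst, ht, hΛt⟩ :=
    exists_eq_mul_apply_of_tendsto ht₀ hcont hone htend hΛ (hs.trans hsKs)
  have hst : s ≤ t := hsKs.trans hKst
  have hat : 0 < a t := zero_lt_one.trans_le (hone t (hs.trans hst))
  refine ⟨t, hst, ht, ?_⟩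
  rw [hΛt]
  calc ∫ τ in s..t, 1 / (τ * a τ ^ q) ≤ log (t / s) / a s ^ q :=
        integral_one_div_mul_rpow_le hq hs0 hst (hcont.mono (Icc_subset_Ici_iff hst |>.2 hs))
          (hmono.mono (Icc_subset_Ici_iff hst |>.2 hs)) (zero_lt_one.trans_le (hone s hs))
    _ = (log K + log (a t)) / a s ^ q := by
        rw [show t / s = K * a t by rw [div_eq_iff hs0.ne']; linarith,
          log_mul (by positivity) hat.ne']

end Inverse

/-- The paper's `λ₀ = r₀^{-n/q}`. -/
noncomputable def lambdaZero (n : ℕ) (q r₀ : ℝ) : ℝ := r₀ ^ (-(n:ℝ) / q)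

lemma gehringCond_of_eqOn {n : ℕ} {q r₀ : ℝ} {ω : ℝ → ℝ} (g : ℝ → ℝ) (hq : 0 ≤ q)
    (ht₀ : 1 < lambdaZero n q r₀) (hag : EqOn (aFun n q r₀ ω) g (Ici (lambdaZero n q r₀)))
    (hcont : ContinuousOn g (Ici (lambdaZero n q r₀)))
    (hmono : MonotoneOn g (Ici (lambdaZero n q r₀)))
    (hone : ∀ t ≥ lambdaZero n q r₀, 1 ≤ g t) (htend : Tendsto (fun t => t / g t) atTop atTop)
    (hbound : ∀ K ≥ 1, ∃ C, ∀ s ≥ lambdaZero n q r₀, ∀ t ≥ s,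
      t = K * s * g t → (log K + log (g t)) / g s ^ q ≤ C)
    (hgrowth : ∃ C, ∀ t ≥ lambdaZero n q r₀, g t ^ q ≤ C * log t) :
    GehringCond n q r₀ ω := by
  set a := aFun n q r₀ ω
  set t₀ := lambdaZero n q r₀
  have hacont : ContinuousOn a (Ici t₀) := hcont.congr hag
  have hamono : MonotoneOn a (Ici t₀) := fun x hx y hy hxy => by
    rw [hag hx, hag hy]
    exact hmono hx hy hxy
  have haone : ∀ t ≥ t₀, 1 ≤ a t := fun t ht => hag ht ▸ hone t ht
  have hatend : Tendsto (fun t => t / a t) atTop atTop :=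
    htend.congr' (by filter_upwards [eventually_ge_atTop t₀] with t ht; rw [hag ht])
  intro Λ _ hΛ
  refine ⟨fun K hK => ?_, ?_⟩
  · obtain ⟨C, hC⟩ := hbound K hK
    refine ⟨C, fun s hs => ?_⟩
    obtain ⟨t, hst, ht, hint⟩ := exists_integral_le_of_tendsto hq (zero_lt_one.trans ht₀)
      hacont hamono haone hatend hΛ hK hs
    have hts : t ≥ t₀ := le_trans hs hst
    rw [hag hts, hag hs] at hint
    rw [hag hts] at ht
    exact hint.trans (hC s hs t hst ht)
  · obtain ⟨C, hC⟩ := hgrowth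
    refine tendsto_integral_one_div_mul_atTop (C := C) ht₀
      (hacont.rpow_const fun _ _ => Or.inr hq) (fun t ht => ?_) fun t ht => ?_
    · exact rpow_pos_of_pos (zero_lt_one.trans_le (haone t ht)) q
    · rw [show aFun n q r₀ ω t = g t from hag ht]
      exact hC t ht

section Formulas

variable {n : ℕ} {q r₀ t : ℝ}

lemma one_lt_lambdaZero (hn : 0 < n) (hq : 0 < q) (hr₀ : r₀ ∈ Ioo 0 1) :
    1 < lambdaZero n q r₀ := by
  have hn' : (0:ℝ) < n := by exact_mod_cast hn
  exact one_lt_rpow_of_pos_of_lt_one_of_neg hr₀.1 hr₀.2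
    (by rw [neg_div]; exact neg_neg_of_pos (by positivity))

lemma mul_log_lambdaZero (hn : 0 < n) (hq : q ≠ 0) (hr₀ : 0 < r₀) :
    q / n * log (lambdaZero n q r₀) = log (1 / r₀) := by
  have hn' : (n:ℝ) ≠ 0 := by exact_mod_cast hn.ne'
  rw [lambdaZero, log_rpow hr₀, one_div, log_inv]
  field_simp

lemma log_one_div_rpow_neg (ht : 0 < t) (p : ℝ) : log (1 / t ^ (-p)) = p * log t := by
  rw [rpow_neg ht.le, one_div, inv_inv, log_rpow ht]

lemma aFun_of_le {ω : ℝ → ℝ} (ht : lambdaZero n q r₀ ≤ t) :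
    aFun n q r₀ ω t = t ^ ω (t ^ (-(q / n))) :=
  if_pos ht

lemma aFun_log {k : ℝ} (hn : 0 < n) (ht₁ : 1 < t) (ht : lambdaZero n q r₀ ≤ t) :
    aFun n q r₀ (fun r => k / log (1 / r)) t = exp (k * n / q) := by
  have hn' : (n:ℝ) ≠ 0 := by exact_mod_cast hn.ne'
  have hlog : log t ≠ 0 := (log_pos ht₁).ne'
  rw [aFun_of_le ht, log_one_div_rpow_neg (by linarith), rpow_def_of_pos (by linarith)]
  congr 1
  field_simp

lemma aFun_loglog {L : ℝ} (hn : 0 < n) (hq : 0 < q) (ht₁ : 1 < t)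
    (ht : lambdaZero n q r₀ ≤ t) :
    aFun n q r₀ (fun r => L * log (log (1 / r)) / log (1 / r)) t
      = (q / n * log t) ^ (L * n / q) := by
  have hn' : (0:ℝ) < n := by exact_mod_cast hn
  have hlog : 0 < log t := log_pos ht₁
  rw [aFun_of_le ht, log_one_div_rpow_neg (by linarith), rpow_def_of_pos (by linarith),
    rpow_def_of_pos (by positivity)]
  congr 1
  field_simp

end Formulas

theorem gehringCond_log {n : ℕ} {q k r₀ : ℝ} (hn : 0 < n) (hq : 0 < q) (hk : 0 ≤ k)
    (hr₀ : r₀ ∈ Ioo 0 1) : GehringCond n q r₀ (fun r => k / log (1 / r)) := by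
  have ht₀ := one_lt_lambdaZero hn hq hr₀
  set A := exp (k * n / q)
  have hA : 1 ≤ A := one_le_exp (by positivity)
  refine gehringCond_of_eqOn (fun _ => A) hq.le ht₀
    (fun t ht => aFun_log hn (ht₀.trans_le ht) ht) continuousOn_const monotoneOn_const
    (fun _ _ => hA) (tendsto_id.atTop_div_const (by positivity))
    (fun K _ => ⟨(log K + log A) / A ^ q, fun _ _ _ _ _ => le_rfl⟩)
    ⟨A ^ q / log (lambdaZero n q r₀), fun t ht => ?_⟩
  rw [div_mul_eq_mul_div, le_div_iff₀ (log_pos ht₀)]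
  have : 0 < A ^ q := by positivity
  gcongr

lemma tendsto_div_rpow_mul_log_atTop {c α : ℝ} (hc : 0 < c) :
    Tendsto (fun t => t / (c * log t) ^ α) atTop atTop := by
  refine (((tendsto_exp_div_rpow_atTop α).comp tendsto_log_atTop).const_mul_atTop
    (rpow_pos_of_pos (inv_pos.2 hc) α)).congr' ?_
  filter_upwards [eventually_gt_atTop 1] with t ht
  have hc' : 0 < c ^ α := rpow_pos_of_pos hc α
  simp only [Function.comp_apply, exp_log (zero_lt_one.trans ht)]
  rw [mul_rpow hc.le (log_pos ht).le, inv_rpow hc.le]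
  field_simp

lemma log_le_half_self {x : ℝ} (hx : 0 < x) : log x ≤ x / 2 := by
  have h := log_le_sub_one_of_pos (half_pos hx)
  rw [log_div hx.ne' two_ne_zero] at h
  linarith [log_two_lt_d9]

lemma log_le_of_eq_add_mul_log {x y κ L : ℝ} (hy : 1 ≤ y) (hxy : y ≤ x) (hκ : 0 ≤ κ)
    (hL0 : 0 ≤ L) (hL1 : L ≤ 1) (hx : x = y + κ + L * log x) :
    log x ≤ log (2 * (1 + κ)) + log y := by
  have hx0 : 0 < x := by linarith
  have hLlog : L * log x ≤ x / 2 := by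
    have := log_nonneg (hy.trans hxy)
    nlinarith [log_le_half_self hx0]
  have hx2 : x ≤ 2 * (1 + κ) * y := by nlinarith
  rw [← log_mul (by positivity) (by positivity)]
  exact log_le_log hx0 hx2

lemma loglog_quotient_le {c α q L K s t : ℝ} (hc : 0 < c) (hα : 0 < α) (hq : 0 < q)
    (hcα : c * α = L) (hL1 : L ≤ 1) (hK : 1 ≤ K) (hs₀ : 0 < s) (hs : 1 ≤ c * log s)
    (hst : s ≤ t) (ht : t = K * s * (c * log t) ^ α) :
    (log K + log ((c * log t) ^ α)) / ((c * log s) ^ α) ^ q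
      ≤ log K + α * log (2 * (1 + c * log K)) + 1 / q := by
  set y := c * log s
  set x := c * log t
  have hxy : y ≤ x := mul_le_mul_of_nonneg_left (log_le_log hs₀ hst) hc.le
  have hx0 : 0 < x := by linarith
  have hκ : 0 ≤ c * log K := mul_nonneg hc.le (log_nonneg hK)
  have hlogt : log t = log K + log s + α * log x := by
    conv_lhs => rw [ht]
    rw [log_mul (by positivity) (by positivity), log_mul (by positivity) hs₀.ne', log_rpow hx0]
  have hxeq : x = y + c * log K + L * log x := by
    rw [← hcα]
    linear_combination c * hlogt
  have hlogx := log_le_of_eq_add_mul_log hs hxy hκ (by linarith [mul_pos hc hα]) hL1 hxeq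
  have hlogy := log_le_rpow_div (x := y) (by linarith) (mul_pos hα hq)
  set M := log K + α * log (2 * (1 + c * log K))
  have hM : 0 ≤ M := add_nonneg (log_nonneg hK)
    (mul_nonneg hα.le (log_nonneg (by linarith)))
  have hY : 1 ≤ y ^ (α * q) := one_le_rpow hs (by positivity)
  have hnum : log K + α * log x ≤ M + y ^ (α * q) / q := by
    have : α * (y ^ (α * q) / (α * q)) = y ^ (α * q) / q := by field_simp
    nlinarith
  rw [log_rpow hx0, ← rpow_mul (by linarith), div_le_iff₀ (by linarith)]
  have hsplit : (M + 1 / q) * y ^ (α * q) = M * y ^ (α * q) + y ^ (α * q) / q := by ring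
  linarith [le_mul_of_one_le_right hM hY]

theorem gehringCond_loglog {n : ℕ} {q L r₀ : ℝ} (hn : 0 < n) (hq : 0 < q) (hL : 0 < L)
    (hLn : L ≤ 1 / n) (hr₀ : r₀ ∈ Ioo 0 1) (hr₀e : 1 ≤ log (1 / r₀)) :
    GehringCond n q r₀ (fun r => L * log (log (1 / r)) / log (1 / r)) := by
  have ht₀ := one_lt_lambdaZero hn hq hr₀
  have hn' : (1:ℝ) ≤ n := by exact_mod_cast hn
  set c := q / n
  set α := L * n / q
  have hc : 0 < c := by positivity
  have hα : 0 < α := by positivity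
  have hLn' : L * n ≤ 1 := by rwa [le_div_iff₀ (by positivity)] at hLn
  have hcα : c * α = L := by simp only [c, α]; field_simp
  have hαq : α * q = L * n := by simp only [α]; field_simp
  have hpos : ∀ t ≥ lambdaZero n q r₀, 0 < t := fun t ht => by linarith
  have hclog : ∀ t ≥ lambdaZero n q r₀, 1 ≤ c * log t := fun t ht =>
    calc 1 ≤ c * log (lambdaZero n q r₀) := hr₀e.trans (mul_log_lambdaZero hn hq.ne' hr₀.1).ge
      _ ≤ c * log t := by gcongr
  refine gehringCond_of_eqOn (fun t => (c * log t) ^ α) hq.le ht₀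
    (fun t ht => aFun_loglog hn hq (ht₀.trans_le ht) ht)
    ((continuousOn_const.mul (continuousOn_log.mono fun t ht => (hpos t ht).ne')).rpow_const
      fun _ _ => Or.inr hα.le)
    (fun t ht t' ht' htt' => ?_) (fun t ht => one_le_rpow (hclog t ht) hα.le)
    (tendsto_div_rpow_mul_log_atTop hc)
    (fun K hK => ⟨_, fun s hs t hst ht => loglog_quotient_le hc hα hq hcα
      (by nlinarith) hK (hpos s hs) (hclog s hs) hst ht⟩)
    ⟨c, fun t ht => ?_⟩
  · have := hclog t ht
    have := hpos t ht
    dsimp only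
    gcongr
  · rw [← rpow_mul (by linarith [hclog t ht]), hαq]
    calc (c * log t) ^ (L * n) ≤ (c * log t) ^ (1:ℝ) :=
          rpow_le_rpow_of_exponent_le (hclog t ht) hLn'
      _ = c * log t := rpow_one _

lemma one_le_log_one_div_of_monotoneOn {L r₀ : ℝ} (hL : 0 < L) (hr₀ : r₀ ∈ Ioo 0 1)
    (hmono : MonotoneOn (fun r => L * log (log (1 / r)) / log (1 / r)) (Ioc 0 r₀)) :
    1 ≤ log (1 / r₀) := by
  by_contra! hu1
  have hu0 : 0 < log (1 / r₀) := log_pos (one_lt_one_div hr₀.1 hr₀.2)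
  have hr : r₀ / exp 1 ∈ Ioc 0 r₀ :=
    ⟨div_pos hr₀.1 (exp_pos 1), div_le_self hr₀.1.le (one_le_exp zero_le_one)⟩
  have hlog : log (1 / (r₀ / exp 1)) = log (1 / r₀) + 1 := by
    rw [one_div_div, log_div (exp_pos 1).ne' hr₀.1.ne', log_exp, one_div, log_inv]
    ring
  have hle := hmono hr ⟨hr₀.1, le_rfl⟩ hr.2
  simp only [hlog] at hle
  have hleft : 0 < L * log (log (1 / r₀) + 1) / (log (1 / r₀) + 1) :=
    div_pos (mul_pos hL (log_pos (by linarith))) (by linarith)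
  have hright : L * log (log (1 / r₀)) / log (1 / r₀) < 0 :=
    div_neg_of_neg_of_pos (mul_neg_of_pos_of_neg hL (log_neg hu0 hu1)) hu0
  linarith

theorem stmt18 (n : ℕ) (hn : 1 ≤ n) (q : ℝ) (hq : 1 < q) :
    -- logarithmic modulus ω(r) = k / ln(1/r)
    (∀ k : ℝ, 0 ≤ k → ∀ r₀ ∈ Set.Ioo (0:ℝ) 1,
      MonotoneOn (fun r => k / Real.log (1 / r)) (Set.Ioc 0 r₀) →
      k / Real.log (1 / r₀) < 1 →
      GehringCond n q r₀ (fun r => k / Real.log (1 / r))) ∧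
    -- nonlogarithmic modulus ω(r) = L · ln ln(1/r) / ln(1/r)
    (∀ L : ℝ, 0 < L → L ≤ 1 / (n:ℝ) → ∀ r₀ ∈ Set.Ioo (0:ℝ) 1,
      MonotoneOn (fun r => L * Real.log (Real.log (1 / r)) / Real.log (1 / r))
        (Set.Ioc 0 r₀) →
      L * Real.log (Real.log (1 / r₀)) / Real.log (1 / r₀) < 1 →
      GehringCond n q r₀
        (fun r => L * Real.log (Real.log (1 / r)) / Real.log (1 / r))) := by
  have hq₀ : 0 < q := zero_lt_one.trans hq
  exact ⟨fun k hk r₀ hr₀ _ _ => gehringCond_log hn hq₀ hk hr₀,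
    fun L hL hLn r₀ hr₀ hmono _ => gehringCond_loglog hn hq₀ hL hLn hr₀
      (one_le_log_one_div_of_monotoneOn hL hr₀ hmono)⟩
end
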